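/- (Sub-gradient-based D-ODWDA.) Let n ≥ 1, T ≥ 1, β > 0, α = β/T. Let P ∈ ℝ^{n×n} be row-stochastic with stationary distribution π ∈ (0,1)^n, and suppose |(P^k)_{ij} − π_j| ≤ γ^{⌊k/ν⌋} for all k ≥ 1 and all i,j, with γ ∈ (0,1) and integer ν ≥ 1. Let X ⊆ ℝ^m be nonempty compact convex and ψ 1-strongly convex with respect to ‖·‖. For t = 1,…,T+1 and i = 1,…,n let f_{i,t}: ℝ^m → ℝ be convex (not necessarily differentiable), and for each i,t let g_{i,t} be a subgradient of f_{i,t} at x_{i,t} with ‖g_{i,t}‖_* ≤ L; moreover assume |f_{i,t}(x) − f_{i,t}(y)| ≤ L‖x − y‖ for all x,y ∈ X. Generate y_{i,0} = 0, x_{i,0} ∈ X, y_{i,t+1} = Σ_j P_{ij} y_{j,t} + g_{i,t}, x_{i,t+1} = Π(y_{i,t+1}, α), and let ȳ_t = Σ_i π_i y_{i,t}, f_t = (1/n)Σ_i f_{i,t}, and x*_t ∈ X a minimizer of f_t over X for t = 1,…,T+1. Assume ‖ȳ_t‖_* ≤ D for all t = 1,…,T, and that for every i and t = 2,…,T+1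 there exists y*_{i,t} with x*_t = Π(y*_{i,t}, α) and ‖y*_{i,t}‖_* ≤ Y. Then both the network dynamic regret R_T = Σ_{t=1}^T ((1/n)Σ_i f_{i,t}(x_{i,t}) − f_t(x*_t)) and, for every j, the local dynamic regret R_T(j) = Σ_{t=1}^T (f_t(x_{j,t}) − f_t(x*_t)) are bounded above by βL²(n/(γ(1 − γ^{1/ν})) + 2) + βL(D + Y) + L·V_T, with V_T = Σ_{t=1}^T ‖x*_{t+1} − x*_t‖. -/

import Mathlib

open Finset Filter Topology
open scoped RealInnerProductSpace BigOperators

/-! With `Γ = n / (γ (1 - γ^{1/ν}))`: unrolling the recursion gives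
`y_{i,t} = Σ_{s<t} Σ_j (P^{t-1-s})_{ij} g_{j,s}` and, by stationarity,
`ȳ_t = Σ_{s<t} Σ_j π_j g_{j,s}`, so geometric mixing bounds the consensus error
`‖y_{i,t} - ȳ_t‖_*` by `L (Γ + 2)`. Strong convexity of `ψ` makes the regularized projection
`α`-Lipschitz from `‖·‖_*` to `‖·‖`, so `x_{i,t}` lies within `α (D + L (Γ + 2) + Y)` of `x*_t`
(in round one, of `x*_2`, which costs one step of the path length). The losses are
`L`-Lipschitz, so summing over the `T` rounds and using `T α = β` gives the bound. -/

section DualNorm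

variable {E : Type*} [NormedAddCommGroup E] [InnerProductSpace ℝ E]

theorem Seminorm.exists_norm_le_mul [FiniteDimensional ℝ E] (p : Seminorm ℝ E)
    (hp : ∀ a, p a = 0 → a = 0) : ∃ C, ∀ a, ‖a‖ ≤ C * p a := by
  rcases subsingleton_or_nontrivial E with _ | _
  · exact ⟨0, fun a => by simp [Subsingleton.elim a 0]⟩
  have hcont : Continuous p :=
    continuousOn_univ.1 (p.convexOn.continuousOn isOpen_univ)
  -- `p` attains a minimum on the compact Euclidean unit sphere, which is positive
  obtain ⟨a₀, ha₀, hmin⟩ := (isCompact_sphere (0 : E) 1).exists_isMinOn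
    (NormedSpace.sphere_nonempty.2 zero_le_one) hcont.continuousOn
  have hpos : 0 < p a₀ := (apply_nonneg p a₀).lt_of_ne fun h => by
    simp [hp a₀ h.symm] at ha₀
  refine ⟨(p a₀)⁻¹, fun a => ?_⟩
  rcases eq_or_ne a 0 with rfl | ha
  · simp
  have hsphere : ‖a‖⁻¹ • a ∈ Metric.sphere (0 : E) 1 := by
    simp [norm_smul, ha]
  have := hmin hsphere
  rw [Set.mem_ofPred_eq, map_smul_eq_mul, norm_inv, norm_norm] at this
  rw [inv_mul_eq_div, le_div_iff₀ hpos]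
  rwa [inv_mul_eq_div, le_div_iff₀ (norm_pos_iff.2 ha), mul_comm] at this

/-- `sSup` of an unbounded set is `0`; the set is bounded when `N` is a definite seminorm on a
finite-dimensional space (`bddAbove_inner_of_le_one`). -/
noncomputable def dualNorm (N : E → ℝ) (v : E) : ℝ :=
  sSup {r : ℝ | ∃ a, N a ≤ 1 ∧ r = ⟪v, a⟫}

theorem dualNorm_le {N : E → ℝ} (hN : N 0 ≤ 1) {v : E} {c : ℝ} (h : ∀ a, N a ≤ 1 → ⟪v, a⟫ ≤ c) :
    dualNorm N v ≤ c :=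
  csSup_le ⟨0, 0, hN, by simp⟩ (by rintro r ⟨a, ha, rfl⟩; exact h a ha)

variable [FiniteDimensional ℝ E] {p : Seminorm ℝ E}

theorem bddAbove_inner_of_le_one (hp : ∀ a, p a = 0 → a = 0) (v : E) :
    BddAbove {r : ℝ | ∃ a, p a ≤ 1 ∧ r = ⟪v, a⟫} := by
  obtain ⟨C, hC⟩ := p.exists_norm_le_mul hp
  refine ⟨‖v‖ * max C 0, ?_⟩
  rintro r ⟨a, ha, rfl⟩
  calc ⟪v, a⟫ ≤ ‖v‖ * ‖a‖ := real_inner_le_norm v a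
    _ ≤ ‖v‖ * max C 0 := by
      gcongr
      calc ‖a‖ ≤ C * p a := hC a
        _ ≤ max C 0 * p a := by gcongr; exact le_max_left _ _
        _ ≤ max C 0 * 1 := by gcongr
        _ = max C 0 := mul_one _

theorem inner_le_dualNorm (hp : ∀ a, p a = 0 → a = 0) {v a : E} (ha : p a ≤ 1) :
    ⟪v, a⟫ ≤ dualNorm p v :=
  le_csSup (bddAbove_inner_of_le_one hp v) ⟨a, ha, rfl⟩

theorem inner_le_dualNorm_mul (hp : ∀ a, p a = 0 → a = 0) (v a : E) :
    ⟪v, a⟫ ≤ dualNorm p v * p a := by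
  rcases (apply_nonneg p a).eq_or_lt with h | h
  · simp [hp a h.symm]
  have hunit : p ((p a)⁻¹ • a) ≤ 1 := by
    rw [map_smul_eq_mul, Real.norm_eq_abs, abs_inv, abs_of_pos h, inv_mul_cancel₀ h.ne']
  have := inner_le_dualNorm hp (v := v) hunit
  rwa [real_inner_smul_right, inv_mul_le_iff₀ h, mul_comm] at this

noncomputable def Seminorm.dual (p : Seminorm ℝ E) (hp : ∀ a, p a = 0 → a = 0) : Seminorm ℝ E :=
  Seminorm.ofSMulLE (dualNorm p)
    (le_antisymm (dualNorm_le (by simp) fun a _ => by simp)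
      (by simpa using inner_le_dualNorm hp (v := 0) (a := 0) (by simp)))
    (fun u v => dualNorm_le (by simp) fun a ha => by
      rw [inner_add_left]
      exact add_le_add (inner_le_dualNorm hp ha) (inner_le_dualNorm hp ha))
    (fun r v => dualNorm_le (by simp) fun a ha => by
      have hneg := inner_le_dualNorm hp (v := v) (a := -a) (by rwa [map_neg_eq_map])
      rw [inner_neg_right] at hneg
      have habs : |⟪v, a⟫| ≤ dualNorm p v := abs_le.2 ⟨by linarith, inner_le_dualNorm hp ha⟩
      rw [real_inner_smul_left, Real.norm_eq_abs]
      calc r * ⟪v, a⟫ ≤ |r| * |⟪v, a⟫| := by rw [← abs_mul]; exact le_abs_self _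
        _ ≤ |r| * dualNorm p v := by gcongr)

end DualNorm

section StrongConvexity

variable {E : Type*} [AddCommGroup E] [Module ℝ E]

theorem IsMinOn.add_mul_sq_le_of_strongConvex {F N : E → ℝ} {X : Set E} {μ : ℝ} {x₀ u : E}
    (hX : Convex ℝ X)
    (hF : ∀ a ∈ X, ∀ b ∈ X, ∀ θ : ℝ, 0 ≤ θ → θ ≤ 1 →
      F (θ • a + (1 - θ) • b) ≤ θ * F a + (1 - θ) * F b - μ * (θ * (1 - θ) / 2) * N (a - b) ^ 2)
    (hmin : IsMinOn F X x₀) (hx₀ : x₀ ∈ X) (hu : u ∈ X) :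
    F x₀ + μ / 2 * N (u - x₀) ^ 2 ≤ F u := by
  have hθ : ∀ θ ∈ Set.Ioo (0 : ℝ) 1, F x₀ + μ * (1 - θ) / 2 * N (u - x₀) ^ 2 ≤ F u := by
    rintro θ ⟨hθ0, hθ1⟩
    have hmem : θ • u + (1 - θ) • x₀ ∈ X := hX hu hx₀ hθ0.le (by linarith) (by ring)
    have h := (hmin hmem).trans (hF u hu x₀ hx₀ θ hθ0.le hθ1.le)
    have : θ * (F x₀ + μ * (1 - θ) / 2 * N (u - x₀) ^ 2) ≤ θ * F u := by linarith
    exact le_of_mul_le_mul_left this hθ0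
  have hlim : Tendsto (fun θ : ℝ => F x₀ + μ * (1 - θ) / 2 * N (u - x₀) ^ 2)
      (𝓝[>] 0) (𝓝 (F x₀ + μ / 2 * N (u - x₀) ^ 2)) := by
    refine Tendsto.mono_left ?_ nhdsWithin_le_nhds
    have hcont : Continuous fun θ : ℝ => F x₀ + μ * (1 - θ) / 2 * N (u - x₀) ^ 2 := by
      fun_prop
    simpa using hcont.tendsto 0
  exact le_of_tendsto hlim (mem_of_superset (Ioo_mem_nhdsGT one_pos) hθ)

end StrongConvexity

section RegularizedProjection

variable {E : Type*} [NormedAddCommGroup E] [InnerProductSpace ℝ E] {X : Set E} {ψ : E → ℝ}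
  {α : ℝ} {Proj : E → E}

theorem regularizedProj_add_sq_le {N : E → ℝ} (hX : Convex ℝ X) (hα : 0 < α)
    (hψ : ∀ (a b : E) (θ : ℝ), 0 ≤ θ → θ ≤ 1 →
      ψ (θ • a + (1 - θ) • b) ≤ θ * ψ a + (1 - θ) * ψ b - θ * (1 - θ) / 2 * (N (a - b)) ^ 2)
    (hProjX : ∀ z, Proj z ∈ X)
    (hProjMin : ∀ z, ∀ u ∈ X, ⟪z, Proj z⟫ + (1 / α) * ψ (Proj z) ≤ ⟪z, u⟫ + (1 / α) * ψ u)
    (z : E) {u : E} (hu : u ∈ X) :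
    ⟪z, Proj z⟫ + (1 / α) * ψ (Proj z) + 1 / α / 2 * N (u - Proj z) ^ 2
      ≤ ⟪z, u⟫ + (1 / α) * ψ u :=
  IsMinOn.add_mul_sq_le_of_strongConvex (F := fun x => ⟪z, x⟫ + (1 / α) * ψ x) hX
    (fun a _ b _ θ h0 h1 => by
      have := mul_le_mul_of_nonneg_left (hψ a b θ h0 h1) (one_div_pos.2 hα).le
      simp only [inner_add_right, real_inner_smul_right]
      linarith)
    (fun u hu => hProjMin z u hu) (hProjX z) hu

theorem regularizedProj_lipschitz [FiniteDimensional ℝ E] {p : Seminorm ℝ E}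
    (hp : ∀ a, p a = 0 → a = 0) (hX : Convex ℝ X) (hα : 0 < α)
    (hψ : ∀ (a b : E) (θ : ℝ), 0 ≤ θ → θ ≤ 1 →
      ψ (θ • a + (1 - θ) • b) ≤ θ * ψ a + (1 - θ) * ψ b - θ * (1 - θ) / 2 * (p (a - b)) ^ 2)
    (hProjX : ∀ z, Proj z ∈ X)
    (hProjMin : ∀ z, ∀ u ∈ X, ⟪z, Proj z⟫ + (1 / α) * ψ (Proj z) ≤ ⟪z, u⟫ + (1 / α) * ψ u)
    (z w : E) : p (Proj z - Proj w) ≤ α * dualNorm p (z - w) := by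
  have hz := regularizedProj_add_sq_le hX hα hψ hProjX hProjMin z (hProjX w)
  have hw := regularizedProj_add_sq_le hX hα hψ hProjX hProjMin w (hProjX z)
  have hdual := inner_le_dualNorm_mul hp (z - w) (Proj w - Proj z)
  rw [map_sub_rev] at hz hdual
  set d := p (Proj z - Proj w)
  have hsum : 1 / α * d ^ 2 ≤ ⟪z - w, Proj w - Proj z⟫ := by
    rw [inner_sub_left, inner_sub_right, inner_sub_right]
    linarith
  have hsq : d ^ 2 ≤ α * dualNorm p (z - w) * d := by
    have := hsum.trans hdual
    rwa [one_div_mul_eq_div, div_le_iff₀ hα, mul_comm, ← mul_assoc] at this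
  have hd : 0 ≤ d := apply_nonneg p _
  have hK : 0 ≤ α * dualNorm p (z - w) := mul_nonneg hα.le (apply_nonneg (p.dual hp) _)
  nlinarith

end RegularizedProjection

theorem Seminorm.sum_sum_smul_le {σ ι M : Type*} [Fintype ι] [AddCommGroup M] [Module ℝ M]
    (q : Seminorm ℝ M) (S : Finset σ) (c : σ → ι → ℝ) (w : ι → σ → M) {L : ℝ}
    (hw : ∀ s ∈ S, ∀ j, q (w j s) ≤ L) :
    q (∑ s ∈ S, ∑ j, c s j • w j s) ≤ L * ∑ s ∈ S, ∑ j, |c s j| := by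
  refine (Finset.le_sum_of_subadditive q (map_zero q).le (map_add_le_add q) _ _).trans ?_
  rw [Finset.mul_sum]
  refine Finset.sum_le_sum fun s hs =>
    (Finset.le_sum_of_subadditive q (map_zero q).le (map_add_le_add q) _ _).trans ?_
  rw [Finset.mul_sum]
  refine Finset.sum_le_sum fun j _ => ?_
  rw [map_smul_eq_mul, Real.norm_eq_abs, mul_comm L]
  exact mul_le_mul_of_nonneg_left (hw s hs j) (abs_nonneg _)

section LinearRecurrence

open scoped Matrix

variable {ι R M : Type*} [Fintype ι] [DecidableEq ι]

theorem linear_recurrence_eq_sum_pow_smul [Semiring R] [AddCommMonoid M] [Module R M]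
    (P : Matrix ι ι R) {y g : ι → ℕ → M} (hy0 : ∀ i, y i 0 = 0)
    (hyrec : ∀ i t, y i (t + 1) = (∑ j, P i j • y j t) + g i t) (t : ℕ) (i : ι) :
    y i t = ∑ s ∈ range t, ∑ j, (P ^ (t - 1 - s)) i j • g j s := by
  induction t generalizing i with
  | zero => simp [hy0]
  | succ t ih =>
    have hprop : ∑ j, P i j • y j t = ∑ s ∈ range t, ∑ l, (P ^ (t - s)) i l • g l s := by
      simp_rw [ih, Finset.smul_sum, smul_smul]
      rw [Finset.sum_comm]
      refine Finset.sum_congr rfl fun s hs => ?_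
      rw [Finset.sum_comm]
      refine Finset.sum_congr rfl fun l _ => ?_
      have hst : t - 1 - s + 1 = t - s := by have := mem_range.1 hs; omega
      rw [← Finset.sum_smul, ← Matrix.mul_apply, ← pow_succ', hst]
    have hnew : g i t = ∑ l, (P ^ (t - t)) i l • g l t := by
      simp [Matrix.one_apply]
    rw [hyrec, hprop, hnew, ← Finset.sum_range_succ (fun s => ∑ l, (P ^ (t - s)) i l • g l s)]
    simp

theorem Matrix.vecMul_pow_eq_self [CommSemiring R] {P : Matrix ι ι R} {π : ι → R}
    (hπ : π ᵥ* P = π) (k : ℕ) : π ᵥ* P ^ k = π := by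
  induction k with
  | zero => simp
  | succ k ih => rw [pow_succ, ← Matrix.vecMul_vecMul, ih, hπ]

theorem linear_recurrence_sub_weighted_sum [CommRing R] [AddCommGroup M] [Module R M]
    {P : Matrix ι ι R} {π : ι → R} (hπ : π ᵥ* P = π) {y g : ι → ℕ → M}
    (hy0 : ∀ i, y i 0 = 0)
    (hyrec : ∀ i t, y i (t + 1) = (∑ j, P i j • y j t) + g i t)
    (t : ℕ) (i : ι) :
    y i t - ∑ l, π l • y l t = ∑ s ∈ range t, ∑ j, ((P ^ (t - 1 - s)) i j - π j) • g j s := by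
  have hmean : ∑ l, π l • y l t = ∑ s ∈ range t, ∑ j, π j • g j s := by
    simp_rw [linear_recurrence_eq_sum_pow_smul P hy0 hyrec t, Finset.smul_sum, smul_smul]
    rw [Finset.sum_comm]
    refine Finset.sum_congr rfl fun s _ => ?_
    rw [Finset.sum_comm]
    refine Finset.sum_congr rfl fun j _ => ?_
    rw [← Finset.sum_smul]
    congr 1
    exact congrFun (Matrix.vecMul_pow_eq_self hπ _) j
  simp_rw [hmean, linear_recurrence_eq_sum_pow_smul P hy0 hyrec t i, ← Finset.sum_sub_distrib,
    sub_smul]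

theorem linear_recurrence_sub_weighted_sum_le [AddCommGroup M] [Module ℝ M]
    (q : Seminorm ℝ M) {P : Matrix ι ι ℝ} {π : ι → ℝ} (hπ : π ᵥ* P = π) {y g : ι → ℕ → M}
    (hy0 : ∀ i, y i 0 = 0)
    (hyrec : ∀ i t, y i (t + 1) = (∑ j, P i j • y j t) + g i t)
    {L : ℝ} {t : ℕ} (hg : ∀ j, ∀ s < t, q (g j s) ≤ L) (i : ι) :
    q (y i t - ∑ l, π l • y l t) ≤ L * ∑ k ∈ range t, ∑ j, |(P ^ k) i j - π j| := by
  rw [linear_recurrence_sub_weighted_sum hπ hy0 hyrec,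
    ← Finset.sum_range_reflect (fun k => ∑ j, |(P ^ k) i j - π j|) t]
  exact q.sum_sum_smul_le _ _ _ fun s hs j => hg j s (mem_range.1 hs)

end LinearRecurrence

section Mixing

open scoped Matrix

theorem pow_div_le_inv_mul_rpow_pow {γ : ℝ} (hγ0 : 0 < γ) (hγ1 : γ ≤ 1) (ν k : ℕ) :
    γ ^ (k / ν) ≤ γ⁻¹ * (γ ^ ((1 : ℝ) / (ν : ℝ))) ^ k := by
  have hfloor : (k : ℝ) / ν - 1 ≤ (k / ν : ℕ) := by
    rw [← Nat.floor_div_eq_div (K := ℝ)]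
    exact (Nat.sub_one_lt_floor _).le
  calc γ ^ (k / ν) = γ ^ ((k / ν : ℕ) : ℝ) := (Real.rpow_natCast γ _).symm
    _ ≤ γ ^ ((k : ℝ) / ν - 1) := Real.rpow_le_rpow_of_exponent_ge hγ0 hγ1 hfloor
    _ = γ⁻¹ * (γ ^ ((1 : ℝ) / (ν : ℝ))) ^ k := by
      rw [← Real.rpow_natCast, ← Real.rpow_mul hγ0.le, Real.rpow_sub hγ0, Real.rpow_one,
        one_div_mul_eq_div, div_eq_inv_mul]

theorem sum_range_le_div_one_sub_add {a : ℕ → ℝ} {A c r : ℝ} (h0 : a 0 ≤ A)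
    (h : ∀ k, 1 ≤ k → a k ≤ c * r ^ k) (hc : 0 ≤ c) (hr0 : 0 ≤ r) (hr1 : r < 1) {t : ℕ}
    (ht : 1 ≤ t) : ∑ k ∈ range t, a k ≤ c / (1 - r) + A := by
  rw [Finset.sum_range_eq_add_Ico _ ht, add_comm]
  gcongr
  calc ∑ k ∈ Ico 1 t, a k ≤ ∑ k ∈ Ico 1 t, c * r ^ k :=
        Finset.sum_le_sum fun k hk => h k (mem_Ico.1 hk).1
    _ = c * ∑ k ∈ Ico 1 t, r ^ k := (Finset.mul_sum _ _ _).symm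
    _ ≤ c * (r ^ 1 / (1 - r)) := by gcongr; exact geom_sum_Ico_le_of_lt_one hr0 hr1
    _ ≤ c * (1 / (1 - r)) := by
      gcongr
      simpa using hr1.le
    _ = c / (1 - r) := mul_one_div c _

variable {ι : Type*} [Fintype ι] [DecidableEq ι]

theorem sum_abs_one_sub_le_two {π : ι → ℝ} (hπ0 : ∀ j, 0 ≤ π j) (hπsum : ∑ j, π j = 1) (i : ι) :
    ∑ j, |(1 : Matrix ι ι ℝ) i j - π j| ≤ 2 :=
  calc ∑ j, |(1 : Matrix ι ι ℝ) i j - π j| ≤ ∑ j, ((1 : Matrix ι ι ℝ) i j + π j) := by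
        refine Finset.sum_le_sum fun j _ => (abs_sub _ _).trans_eq ?_
        have hδ : 0 ≤ (1 : Matrix ι ι ℝ) i j := by rw [Matrix.one_apply]; split_ifs <;> norm_num
        rw [abs_of_nonneg hδ, abs_of_nonneg (hπ0 j)]
    _ = 2 := by simp [Finset.sum_add_distrib, Matrix.one_apply, hπsum]; norm_num

theorem sum_range_sum_abs_pow_sub_le (P : Matrix ι ι ℝ) {π : ι → ℝ} (hπ0 : ∀ j, 0 ≤ π j)
    (hπsum : ∑ j, π j = 1) {γ : ℝ} (hγ0 : 0 < γ) (hγ1 : γ < 1) {ν : ℕ} (hν : 1 ≤ ν)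
    (hmix : ∀ k : ℕ, 1 ≤ k → ∀ i j, |(P ^ k) i j - π j| ≤ γ ^ (k / ν)) (i : ι) {t : ℕ}
    (ht : 1 ≤ t) :
    ∑ k ∈ range t, ∑ j, |(P ^ k) i j - π j|
      ≤ (Fintype.card ι : ℝ) / (γ * (1 - γ ^ ((1 : ℝ) / (ν : ℝ)))) + 2 := by
  set r := γ ^ ((1 : ℝ) / (ν : ℝ))
  have hν0 : (0 : ℝ) < ν := by exact_mod_cast hν
  have hr1 : r < 1 := Real.rpow_lt_one hγ0.le hγ1 (by positivity)
  rw [← div_div]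
  refine sum_range_le_div_one_sub_add (by simpa using sum_abs_one_sub_le_two hπ0 hπsum i)
    (fun k hk => ?_) (by positivity) (by positivity) hr1 ht
  calc ∑ j, |(P ^ k) i j - π j| ≤ ∑ _j : ι, γ⁻¹ * r ^ k :=
        Finset.sum_le_sum fun j _ =>
          (hmix k hk i j).trans (pow_div_le_inv_mul_rpow_pow hγ0 hγ1.le ν k)
    _ = Fintype.card ι / γ * r ^ k := by simp [div_eq_mul_inv]; ring

theorem linear_recurrence_consensus_le {M : Type*} [AddCommGroup M] [Module ℝ M]
    (q : Seminorm ℝ M) {P : Matrix ι ι ℝ} {π : ι → ℝ} (hπ0 : ∀ j, 0 ≤ π j)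
    (hπsum : ∑ j, π j = 1) (hπ : π ᵥ* P = π) {γ : ℝ} (hγ0 : 0 < γ) (hγ1 : γ < 1) {ν : ℕ}
    (hν : 1 ≤ ν) (hmix : ∀ k : ℕ, 1 ≤ k → ∀ i j, |(P ^ k) i j - π j| ≤ γ ^ (k / ν))
    {y g : ι → ℕ → M} (hy0 : ∀ i, y i 0 = 0)
    (hyrec : ∀ i t, y i (t + 1) = (∑ j, P i j • y j t) + g i t) {L : ℝ} (hL : 0 ≤ L) {t : ℕ}
    (ht : 1 ≤ t) (hg : ∀ j, ∀ s < t, q (g j s) ≤ L) (i : ι) :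
    q (y i t - ∑ l, π l • y l t)
      ≤ L * ((Fintype.card ι : ℝ) / (γ * (1 - γ ^ ((1 : ℝ) / (ν : ℝ)))) + 2) :=
  (linear_recurrence_sub_weighted_sum_le q hπ hy0 hyrec hg i).trans <|
    mul_le_mul_of_nonneg_left
      (sum_range_sum_abs_pow_sub_le P hπ0 hπsum hγ0 hγ1 hν hmix i ht) hL

end Mixing

section Regret

theorem sum_mean_sub_mean_le {ι E : Type*} [Fintype ι] [Nonempty ι] [Sub E]
    {f : ι → ℕ → E → ℝ} {N : E → ℝ} {X : Set E} {L : ℝ} (hL : 0 ≤ L) {S : Finset ℕ}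
    (hlip : ∀ i, ∀ t ∈ S, ∀ a ∈ X, ∀ b ∈ X, |f i t a - f i t b| ≤ L * N (a - b))
    {a : ℕ → ι → E} {b : ℕ → E} {δ : ℕ → ℝ} (ha : ∀ t ∈ S, ∀ i, a t i ∈ X)
    (hb : ∀ t ∈ S, b t ∈ X) (hδ : ∀ t ∈ S, ∀ i, N (a t i - b t) ≤ δ t) :
    ∑ t ∈ S, (1 / (Fintype.card ι : ℝ) * ∑ i, f i t (a t i)
        - 1 / (Fintype.card ι : ℝ) * ∑ i, f i t (b t))
      ≤ L * ∑ t ∈ S, δ t := by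
  rw [Finset.mul_sum]
  refine Finset.sum_le_sum fun t ht => ?_
  have hround : ∑ i, (f i t (a t i) - f i t (b t)) ≤ ∑ _i : ι, L * δ t :=
    Finset.sum_le_sum fun i _ => (le_abs_self _).trans <|
      (hlip i t ht _ (ha t ht i) _ (hb t ht)).trans (mul_le_mul_of_nonneg_left (hδ t ht i) hL)
  rw [Finset.sum_sub_distrib, Finset.sum_const, Finset.card_univ, nsmul_eq_mul] at hround
  rw [← mul_sub, one_div_mul_eq_div, div_le_iff₀ (by simp [Fintype.card_pos])]
  linarith

theorem Seminorm.apply_sub_le_add_apply_succ_sub {E : Type*} [AddCommGroup E] [Module ℝ E]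
    (p : Seminorm ℝ E) {u : E} {xstar : ℕ → E} {B : ℝ} {t : ℕ} (ht : 1 ≤ t)
    (hclose : ∀ s, 2 ≤ s → s ≤ t + 1 → p (u - xstar s) ≤ B) :
    p (u - xstar t) ≤ B + p (xstar (t + 1) - xstar t) := by
  rcases ht.eq_or_lt with rfl | ht
  · calc p (u - xstar 1) = p ((u - xstar 2) + (xstar 2 - xstar 1)) := by abel_nf
      _ ≤ B + p (xstar 2 - xstar 1) :=
        (map_add_le_add p _ _).trans (add_le_add_left (hclose 2 le_rfl le_rfl) _)
  · exact (hclose t ht (by omega)).trans (le_add_of_nonneg_right (apply_nonneg p _))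

end Regret

theorem dodwda_subgradient_dynamic_regret_general {m : ℕ} (n T : ℕ) (hn : 1 ≤ n) (hT : 1 ≤ T)
    (β α : ℝ) (hβ : 0 < β) (hα : α = β / T)
    -- `P` is row-stochastic with stationary distribution `π ∈ (0,1)^n`
    (P : Matrix (Fin n) (Fin n) ℝ)
    (π : Fin n → ℝ) (hπ0 : ∀ i, 0 < π i)
    (hπsum : ∑ i, π i = 1) (hπstat : ∀ j, ∑ i, π i * P i j = π j)
    -- geometric mixing of the matrix powers of `P` (`k / ν` is `⌊k/ν⌋`)
    (γ : ℝ) (hγ0 : 0 < γ) (hγ1 : γ < 1) (ν : ℕ) (hν : 1 ≤ ν)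
    (hmix : ∀ k : ℕ, 1 ≤ k → ∀ i j, |(P ^ k) i j - π j| ≤ γ ^ (k / ν))
    -- `X` is nonempty, compact, and convex
    (X : Set (EuclideanSpace ℝ (Fin m)))
    (hXcv : Convex ℝ X)
    -- `N` is a norm on `ℝ^m` and `Nd` its dual norm
    (N : EuclideanSpace ℝ (Fin m) → ℝ)
    (hNtri : ∀ a b, N (a + b) ≤ N a + N b)
    (hNsmul : ∀ (c : ℝ) (a : EuclideanSpace ℝ (Fin m)), N (c • a) = |c| * N a)
    (hNdef : ∀ a, N a = 0 ↔ a = 0)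
    (Nd : EuclideanSpace ℝ (Fin m) → ℝ)
    (hNd : ∀ v, Nd v = sSup {r : ℝ | ∃ a, N a ≤ 1 ∧ r = ⟪v, a⟫})
    -- `ψ` is 1-strongly convex with respect to `N`
    (ψ : EuclideanSpace ℝ (Fin m) → ℝ)
    (hψ : ∀ (a b : EuclideanSpace ℝ (Fin m)) (θ : ℝ), 0 ≤ θ → θ ≤ 1 →
      ψ (θ • a + (1 - θ) • b) ≤ θ * ψ a + (1 - θ) * ψ b - θ * (1 - θ) / 2 * (N (a - b)) ^ 2)
    -- `Proj` is the `ψ`-regularized projection onto `X` with stepsize `α`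
    (Proj : EuclideanSpace ℝ (Fin m) → EuclideanSpace ℝ (Fin m))
    (hProjX : ∀ z, Proj z ∈ X)
    (hProjMin : ∀ z, ∀ u ∈ X,
      ⟪z, Proj z⟫ + (1 / α) * ψ (Proj z) ≤ ⟪z, u⟫ + (1 / α) * ψ u)
    -- the losses: convex (not necessarily differentiable), `L`-Lipschitz on `X`
    (L : ℝ)
    (f : Fin n → ℕ → EuclideanSpace ℝ (Fin m) → ℝ)
    (hlip : ∀ (i : Fin n) (t : ℕ), t ≤ T + 1 → ∀ a ∈ X, ∀ b ∈ X,
      |f i t a - f i t b| ≤ L * N (a - b))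
    -- the D-ODWDA iterates, driven by subgradients `g_{i,t} ∈ ∂f_{i,t}(x_{i,t})`
    (y x : Fin n → ℕ → EuclideanSpace ℝ (Fin m))
    (g : Fin n → ℕ → EuclideanSpace ℝ (Fin m))
    (hgbd : ∀ (i : Fin n) (t : ℕ), t ≤ T + 1 → Nd (g i t) ≤ L)
    (hy0 : ∀ i, y i 0 = 0)
    (hyrec : ∀ i t, y i (t + 1) = (∑ j, P i j • y j t) + g i t)
    (hxrec : ∀ i t, x i (t + 1) = Proj (y i (t + 1)))
    -- the weighted dual average
    (ybar : ℕ → EuclideanSpace ℝ (Fin m))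
    (hybar : ∀ t, ybar t = ∑ i, π i • y i t)
    -- `x*_t` minimizes `f_t = (1/n) Σ_i f_{i,t}` over `X`
    (xstar : ℕ → EuclideanSpace ℝ (Fin m))
    (hxstarX : ∀ t : ℕ, 1 ≤ t → t ≤ T + 1 → xstar t ∈ X)
    -- a uniform bound on `‖ȳ_t‖_*`
    (D : ℝ)
    (hybarbd : ∀ t : ℕ, 1 ≤ t → t ≤ T → Nd (ybar t) ≤ D)
    -- dual representatives of the round optima, dual-norm-bounded by `Y`
    (Y : ℝ)
    (hYstar : ∀ (i : Fin n) (t : ℕ), 2 ≤ t → t ≤ T + 1 →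
      ∃ ystar : EuclideanSpace ℝ (Fin m), xstar t = Proj ystar ∧ Nd ystar ≤ Y) :
    -- both the network and every local dynamic regret satisfy the bound
    (∑ t ∈ Icc 1 T,
        ((1 / (n : ℝ)) * ∑ i, f i t (x i t) - (1 / (n : ℝ)) * ∑ i, f i t (xstar t))
      ≤ β * L ^ 2 * ((n : ℝ) / (γ * (1 - γ ^ ((1 : ℝ) / (ν : ℝ)))) + 2)
        + β * L * (D + Y)
        + L * ∑ t ∈ Icc 1 T, N (xstar (t + 1) - xstar t)) ∧
    (∀ j : Fin n,
      ∑ t ∈ Icc 1 T,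
          ((1 / (n : ℝ)) * ∑ i, f i t (x j t) - (1 / (n : ℝ)) * ∑ i, f i t (xstar t))
        ≤ β * L ^ 2 * ((n : ℝ) / (γ * (1 - γ ^ ((1 : ℝ) / (ν : ℝ)))) + 2)
          + β * L * (D + Y)
          + L * ∑ t ∈ Icc 1 T, N (xstar (t + 1) - xstar t)) := by
  let p : Seminorm ℝ (EuclideanSpace ℝ (Fin m)) :=
    Seminorm.of N hNtri fun c a => by rw [hNsmul, Real.norm_eq_abs]
  have hp : ∀ a, p a = 0 → a = 0 := fun a => (hNdef a).1
  obtain rfl : Nd = dualNorm N := funext hNd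
  have hα0 : 0 < α := hα ▸ div_pos hβ (by exact_mod_cast hT)
  have hL : 0 ≤ L := (apply_nonneg (p.dual hp) _).trans (hgbd ⟨0, hn⟩ 0 (Nat.zero_le _))
  set Γ := (n : ℝ) / (γ * (1 - γ ^ ((1 : ℝ) / (ν : ℝ))))
  have hy : ∀ i t, 1 ≤ t → t ≤ T → p.dual hp (y i t) ≤ D + L * (Γ + 2) := fun i t ht1 htT => by
    have hcons := linear_recurrence_consensus_le (p.dual hp) (fun j => (hπ0 j).le) hπsum
      (funext hπstat) hγ0 hγ1 hν hmix hy0 hyrec hL ht1 (fun j s hs => hgbd j s (by omega)) i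
    rw [← hybar, Fintype.card_fin] at hcons
    exact (le_map_add_map_sub _ _ (ybar t)).trans (add_le_add (hybarbd t ht1 htT) hcons)
  have hdist : ∀ i, ∀ t ∈ Icc 1 T, x i t ∈ X ∧
      N (x i t - xstar t) ≤ α * (D + L * (Γ + 2) + Y) + N (xstar (t + 1) - xstar t) := by
    intro i t ht
    obtain ⟨ht1, htT⟩ := mem_Icc.1 ht
    obtain ⟨r, rfl⟩ : ∃ r, t = r + 1 := ⟨t - 1, by omega⟩
    refine ⟨hxrec i r ▸ hProjX _, p.apply_sub_le_add_apply_succ_sub ht1 fun s hs2 hst => ?_⟩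
    obtain ⟨ys, hxs, hys⟩ := hYstar i s hs2 (by omega)
    rw [hxrec, hxs]
    refine (regularizedProj_lipschitz hp hXcv hα0 hψ hProjX hProjMin _ _).trans ?_
    gcongr
    exact (map_sub_le_add (p.dual hp) _ _).trans (add_le_add (hy i _ ht1 htT) hys)
  have htotal : L * ∑ t ∈ Icc 1 T, (α * (D + L * (Γ + 2) + Y) + N (xstar (t + 1) - xstar t))
      = β * L ^ 2 * (Γ + 2) + β * L * (D + Y) + L * ∑ t ∈ Icc 1 T, N (xstar (t + 1) - xstar t) := by
    rw [sum_add_distrib, sum_const, Nat.card_Icc, nsmul_eq_mul, hα, Nat.add_sub_cancel]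
    field_simp
    ring
  have : Nonempty (Fin n) := ⟨⟨0, hn⟩⟩
  have hlipT := fun i t (ht : t ∈ Icc 1 T) => hlip i t (Nat.le_succ_of_le (mem_Icc.1 ht).2)
  have hxstarT := fun t (ht : t ∈ Icc 1 T) =>
    hxstarX t (mem_Icc.1 ht).1 (Nat.le_succ_of_le (mem_Icc.1 ht).2)
  refine ⟨le_of_le_of_eq ?_ htotal, fun j => le_of_le_of_eq ?_ htotal⟩
  · simpa only [Fintype.card_fin] using sum_mean_sub_mean_le hL hlipT
      (fun t ht i => (hdist i t ht).1) hxstarT (fun t ht i => (hdist i t ht).2)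
  · simpa only [Fintype.card_fin] using sum_mean_sub_mean_le (a := fun t _ => x j t) hL hlipT
      (fun t ht _ => (hdist j t ht).1) hxstarT (fun t ht _ => (hdist j t ht).2)

/-- **Corollary 2 (sub-gradient-based D-ODWDA).**
Under the assumptions of the network dynamic regret theorem, but with convex, not
necessarily differentiable losses `f_{i,t}` that are `L`-Lipschitz on `X` w.r.t. the norm
`N`, and with the update driven by subgradients `g_{i,t} ∈ ∂f_{i,t}(x_{i,t})` satisfying
`‖g_{i,t}‖_* ≤ L`, both the network dynamic regret and every agent's local dynamic regret
are bounded above by `βL²(n/(γ(1 − γ^{1/ν})) + 2) + βL(D + Y) + L·V_T`. -/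
theorem dodwda_subgradient_dynamic_regret {m : ℕ} (n T : ℕ) (hn : 1 ≤ n) (hT : 1 ≤ T)
    (β α : ℝ) (hβ : 0 < β) (hα : α = β / T)
    -- `P` is row-stochastic with stationary distribution `π ∈ (0,1)^n`
    (P : Matrix (Fin n) (Fin n) ℝ)
    (hPnn : ∀ i j, 0 ≤ P i j) (hProw : ∀ i, ∑ j, P i j = 1)
    (π : Fin n → ℝ) (hπ0 : ∀ i, 0 < π i) (hπ1 : ∀ i, π i < 1)
    (hπsum : ∑ i, π i = 1) (hπstat : ∀ j, ∑ i, π i * P i j = π j)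
    -- geometric mixing of the matrix powers of `P` (`k / ν` is `⌊k/ν⌋`)
    (γ : ℝ) (hγ0 : 0 < γ) (hγ1 : γ < 1) (ν : ℕ) (hν : 1 ≤ ν)
    (hmix : ∀ k : ℕ, 1 ≤ k → ∀ i j, |(P ^ k) i j - π j| ≤ γ ^ (k / ν))
    -- `X` is nonempty, compact, and convex
    (X : Set (EuclideanSpace ℝ (Fin m)))
    (hXne : X.Nonempty) (hXcp : IsCompact X) (hXcv : Convex ℝ X)
    -- `N` is a norm on `ℝ^m` and `Nd` its dual norm
    (N : EuclideanSpace ℝ (Fin m) → ℝ)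
    (hNtri : ∀ a b, N (a + b) ≤ N a + N b)
    (hNsmul : ∀ (c : ℝ) (a : EuclideanSpace ℝ (Fin m)), N (c • a) = |c| * N a)
    (hNdef : ∀ a, N a = 0 ↔ a = 0)
    (Nd : EuclideanSpace ℝ (Fin m) → ℝ)
    (hNd : ∀ v, Nd v = sSup {r : ℝ | ∃ a, N a ≤ 1 ∧ r = ⟪v, a⟫})
    -- `ψ` is 1-strongly convex with respect to `N`
    (ψ : EuclideanSpace ℝ (Fin m) → ℝ)
    (hψ : ∀ (a b : EuclideanSpace ℝ (Fin m)) (θ : ℝ), 0 ≤ θ → θ ≤ 1 →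
      ψ (θ • a + (1 - θ) • b) ≤ θ * ψ a + (1 - θ) * ψ b - θ * (1 - θ) / 2 * (N (a - b)) ^ 2)
    -- `Proj` is the `ψ`-regularized projection onto `X` with stepsize `α`
    (Proj : EuclideanSpace ℝ (Fin m) → EuclideanSpace ℝ (Fin m))
    (hProjX : ∀ z, Proj z ∈ X)
    (hProjMin : ∀ z, ∀ u ∈ X,
      ⟪z, Proj z⟫ + (1 / α) * ψ (Proj z) ≤ ⟪z, u⟫ + (1 / α) * ψ u)
    -- the losses: convex (not necessarily differentiable), `L`-Lipschitz on `X`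
    (L : ℝ)
    (f : Fin n → ℕ → EuclideanSpace ℝ (Fin m) → ℝ)
    (hconv : ∀ (i : Fin n) (t : ℕ), t ≤ T + 1 → ConvexOn ℝ Set.univ (f i t))
    (hlip : ∀ (i : Fin n) (t : ℕ), t ≤ T + 1 → ∀ a ∈ X, ∀ b ∈ X,
      |f i t a - f i t b| ≤ L * N (a - b))
    -- the D-ODWDA iterates, driven by subgradients `g_{i,t} ∈ ∂f_{i,t}(x_{i,t})`
    (y x : Fin n → ℕ → EuclideanSpace ℝ (Fin m))
    (g : Fin n → ℕ → EuclideanSpace ℝ (Fin m))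
    (hsubgrad : ∀ (i : Fin n) (t : ℕ), t ≤ T + 1 → ∀ z,
      f i t (x i t) + ⟪g i t, z - x i t⟫ ≤ f i t z)
    (hgbd : ∀ (i : Fin n) (t : ℕ), t ≤ T + 1 → Nd (g i t) ≤ L)
    (hy0 : ∀ i, y i 0 = 0) (hx0 : ∀ i, x i 0 ∈ X)
    (hyrec : ∀ i t, y i (t + 1) = (∑ j, P i j • y j t) + g i t)
    (hxrec : ∀ i t, x i (t + 1) = Proj (y i (t + 1)))
    -- the weighted dual average
    (ybar : ℕ → EuclideanSpace ℝ (Fin m))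
    (hybar : ∀ t, ybar t = ∑ i, π i • y i t)
    -- `x*_t` minimizes `f_t = (1/n) Σ_i f_{i,t}` over `X`
    (xstar : ℕ → EuclideanSpace ℝ (Fin m))
    (hxstarX : ∀ t : ℕ, 1 ≤ t → t ≤ T + 1 → xstar t ∈ X)
    (hxstarMin : ∀ t : ℕ, 1 ≤ t → t ≤ T + 1 → ∀ u ∈ X,
      (1 / (n : ℝ)) * ∑ i, f i t (xstar t) ≤ (1 / (n : ℝ)) * ∑ i, f i t u)
    -- a uniform bound on `‖ȳ_t‖_*`
    (D : ℝ) (hD : 0 ≤ D)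
    (hybarbd : ∀ t : ℕ, 1 ≤ t → t ≤ T → Nd (ybar t) ≤ D)
    -- dual representatives of the round optima, dual-norm-bounded by `Y`
    (Y : ℝ) (hY : 0 ≤ Y)
    (hYstar : ∀ (i : Fin n) (t : ℕ), 2 ≤ t → t ≤ T + 1 →
      ∃ ystar : EuclideanSpace ℝ (Fin m), xstar t = Proj ystar ∧ Nd ystar ≤ Y) :
    -- both the network and every local dynamic regret satisfy the bound
    (∑ t ∈ Icc 1 T,
        ((1 / (n : ℝ)) * ∑ i, f i t (x i t) - (1 / (n : ℝ)) * ∑ i, f i t (xstar t))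
      ≤ β * L ^ 2 * ((n : ℝ) / (γ * (1 - γ ^ ((1 : ℝ) / (ν : ℝ)))) + 2)
        + β * L * (D + Y)
        + L * ∑ t ∈ Icc 1 T, N (xstar (t + 1) - xstar t)) ∧
    (∀ j : Fin n,
      ∑ t ∈ Icc 1 T,
          ((1 / (n : ℝ)) * ∑ i, f i t (x j t) - (1 / (n : ℝ)) * ∑ i, f i t (xstar t))
        ≤ β * L ^ 2 * ((n : ℝ) / (γ * (1 - γ ^ ((1 : ℝ) / (ν : ℝ)))) + 2)
          + β * L * (D + Y)
          + L * ∑ t ∈ Icc 1 T, N (xstar (t + 1) - xstar t)) :=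
  dodwda_subgradient_dynamic_regret_general n T hn hT β α hβ hα P π hπ0 hπsum hπstat γ hγ0 hγ1 ν hν
    hmix X hXcv N hNtri hNsmul hNdef Nd hNd ψ hψ Proj hProjX hProjMin L f hlip y x g hgbd hy0 hyrec
    hxrec ybar hybar xstar hxstarX D hybarbd Y hYstar
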